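/- arXiv:1804.07849 — 2 statements merged into one kernel-verified Lean document; each statement's English description precedes it below -/
import Mathlib

section
/- Let l_N(θ) = Ĥ_θ(q,p) − Ĥ_θ(Z) be the negative empirical variational objective, where Ĥ_θ(q,p) = (1/N)·Σ_{i=1}^N ( − Σ_{z=1}^m q_θ(z|y_i) · ln p(z|x_i) ) and Ĥ_θ(Z) = − Σ_{z=1}^m q̂_θ(z) · ln q̂_θ(z), and for each minibatch k let l_k(θ) be the same quantity computed only from the examples in B_k (using the minibatch estimates q̂_{k,θ} in place of q̂_θ). Then for every θ the bias of the average minibatch gradient satisfies ∇l_N(θ) − (1/K)·Σ_{k=1}^K ∇l_k(θ) = (1/K)·Σ_{k=1}^K Σ_{z=1}^m ln( q̂_θ(z) / q̂_{k,θ}(z) ) · ∇q̂_{k,θ}(z). -/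
/-!
The cross-entropy part of `l_N` is linear in the per-example terms, so it equals the average of
the cross-entropy parts of the `l_k` and cancels from the bias. For the entropy part, the
derivative of `∑ z, r z * log (r z)` along a curve of probability vectors `r` is
`∑ z, log (r z) • r' z`: the extra term `∑ z, r' z` vanishes because `∑ z, r z` is constant.
Since `∇q̂ = (1/K) ∑ k, ∇q̂_k`, the two entropy derivatives differ by
`(1/K) ∑ k, ∑ z, (log q̂ z - log q̂_k z) • ∇q̂_k z`.
-/

open Finset Real Filter

section Derivatives

variable {E : Type*} [NormedAddCommGroup E] [NormedSpace ℝ E] {α ι : Type*}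

theorem sum_fderiv_eq_zero_of_sum_eq_const [Fintype α] {F : E → α → ℝ} {F' : α → E →L[ℝ] ℝ}
    {θ : E} {c : ℝ}
    (hF : ∀ z, HasFDerivAt (fun θ => F θ z) (F' z) θ) (hsum : ∀ θ, ∑ z, F θ z = c) :
    ∑ z, F' z = 0 :=
  (HasFDerivAt.fun_sum fun z _ => hF z).unique <|
    (hasFDerivAt_const c θ).congr_of_eventuallyEq (Eventually.of_forall hsum)

theorem hasFDerivAt_sum_mul_log_of_sum_eq_const [Fintype α] {F : E → α → ℝ}
    {F' : α → E →L[ℝ] ℝ} {θ : E} {c : ℝ} (hF : ∀ z, HasFDerivAt (fun θ => F θ z) (F' z) θ)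
    (hne : ∀ z, F θ z ≠ 0) (hsum : ∀ θ, ∑ z, F θ z = c) :
    HasFDerivAt (fun θ => ∑ z, F θ z * log (F θ z)) (∑ z, log (F θ z) • F' z) θ := by
  have hterm : ∀ z, HasFDerivAt (fun θ => F θ z * log (F θ z))
      (F' z + log (F θ z) • F' z) θ := by
    intro z
    have h := (hF z).mul ((hF z).log (hne z))
    rwa [smul_smul, mul_inv_cancel₀ (hne z), one_smul] at h
  have hsum' := HasFDerivAt.fun_sum fun z (_ : z ∈ univ) => hterm z
  rwa [sum_add_distrib, sum_fderiv_eq_zero_of_sum_eq_const hF hsum, zero_add] at hsum'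

theorem hasFDerivAt_const_mul_sum {q : E → ι → α → ℝ} {q' : ι → α → E →L[ℝ] ℝ} {θ : E}
    (hq : ∀ i z, HasFDerivAt (fun θ => q θ i z) (q' i z) θ) (s : Finset ι) (c : ℝ)
    {Q : E → α → ℝ} (hQ : ∀ θ z, Q θ z = c * ∑ i ∈ s, q θ i z) (z : α) :
    HasFDerivAt (fun θ => Q θ z) (c • ∑ i ∈ s, q' i z) θ :=
  ((HasFDerivAt.fun_sum fun i _ => hq i z).const_mul c).congr_of_eventuallyEq
    (Eventually.of_forall fun θ => hQ θ z)

/-- `Q` is the empirical label marginal of the examples in `s` (with weight `c`), and `a i z`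
stands for `log p(z | x_i)`. -/
theorem hasFDerivAt_crossEntropy_sub_entropy [Fintype α] {q : E → ι → α → ℝ}
    {q' : ι → α → E →L[ℝ] ℝ} {θ : E} (hq : ∀ i z, HasFDerivAt (fun θ => q θ i z) (q' i z) θ)
    (hqsum : ∀ θ i, ∑ z, q θ i z = 1) (a : ι → α → ℝ) (s : Finset ι) (c : ℝ)
    {Q : E → α → ℝ} (hQ : ∀ θ z, Q θ z = c * ∑ i ∈ s, q θ i z) (hQne : ∀ z, Q θ z ≠ 0) :
    HasFDerivAt (fun θ => c * ∑ i ∈ s, (-∑ z, q θ i z * a i z) - (-∑ z, Q θ z * log (Q θ z)))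
      (c • ∑ i ∈ s, (-∑ z, a i z • q' i z) + ∑ z, log (Q θ z) • c • ∑ i ∈ s, q' i z) θ := by
  have hQsum : ∀ θ, ∑ z, Q θ z = c * s.card := fun θ => by
    simp only [hQ, ← mul_sum, sum_comm (s := univ), hqsum, sum_const, nsmul_eq_mul, mul_one]
  have hcross := (HasFDerivAt.fun_sum fun i (_ : i ∈ s) =>
    (HasFDerivAt.fun_sum fun z (_ : z ∈ univ) => (hq i z).mul_const (a i z)).neg).const_mul c
  have hent := hasFDerivAt_sum_mul_log_of_sum_eq_const (hasFDerivAt_const_mul_sum hq s c hQ)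
    hQne hQsum
  exact (hcross.sub hent.neg).congr_fderiv (sub_neg_eq_add _ _)

end Derivatives

theorem one_div_card_smul_sum_eq_of_partition {ι κ V : Type*} [Fintype ι] [DecidableEq ι]
    [Fintype κ] [AddCommGroup V] [Module ℝ V] {M : ℕ}
    (hcard : Fintype.card ι = M * Fintype.card κ) (B : κ → Finset ι)
    (hdisj : ∀ k k', k ≠ k' → Disjoint (B k) (B k')) (hcover : univ.biUnion B = univ) (v : ι → V) :
    (1 / (Fintype.card ι : ℝ)) • ∑ i, v i
      = (1 / (Fintype.card κ : ℝ)) • ∑ k, (1 / (M : ℝ)) • ∑ i ∈ B k, v i := by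
  have hsplit : ∑ i, v i = ∑ k, ∑ i ∈ B k, v i := by
    rw [← hcover, sum_biUnion fun k _ k' _ => hdisj k k']
  rw [hsplit, ← smul_sum, smul_smul, hcard, Nat.cast_mul, one_div_mul_one_div, mul_comm]

theorem smul_sum_add_sum_smul_smul_sum_sub_smul_sum {κ α V : Type*} [Fintype κ] [Fintype α]
    [AddCommGroup V] [Module ℝ V] (r : ℝ) (A : κ → V) (a : α → ℝ) (b : κ → α → ℝ)
    (D : κ → α → V) :
    (r • ∑ k, A k + ∑ z, a z • r • ∑ k, D k z) - r • ∑ k, (A k + ∑ z, b k z • D k z)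
      = r • ∑ k, ∑ z, (a z - b k z) • D k z := by
  simp only [sub_smul, sum_sub_distrib, smul_sub, smul_sum, sum_add_distrib, smul_add,
    smul_comm r]
  rw [sum_comm (s := univ) (t := univ) (f := fun z k => a z • r • D k z)]
  abel

theorem variational_bias_general
    {𝒳 𝒴 : Type}
    (m d N M K : ℕ) (hN : 1 ≤ N) (hM : 1 ≤ M)
    (hNMK : N = M * K)
    (x : Fin N → 𝒳) (y : Fin N → 𝒴)
    (B : Fin K → Finset (Fin N))
    (hBcard : ∀ k, (B k).card = M)
    (hBdisj : ∀ k k', k ≠ k' → Disjoint (B k) (B k'))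
    (hBcover : Finset.univ.biUnion B = (Finset.univ : Finset (Fin N)))
    (q : (Fin d → ℝ) → 𝒴 → Fin m → ℝ)
    (hqdiff : ∀ w z, Differentiable ℝ (fun θ => q θ w z))
    (hqpos : ∀ θ w z, 0 < q θ w z)
    (hqsum : ∀ θ w, ∑ z, q θ w z = 1)
    (p : 𝒳 → Fin m → ℝ)
    (qhat : (Fin d → ℝ) → Fin m → ℝ)
    (hqhat : ∀ θ z, qhat θ z = (1 / (N : ℝ)) * ∑ i, q θ (y i) z)
    (qhatk : Fin K → (Fin d → ℝ) → Fin m → ℝ)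
    (hqhatk : ∀ k θ z, qhatk k θ z = (1 / (M : ℝ)) * ∑ i ∈ B k, q θ (y i) z)
    (lN : (Fin d → ℝ) → ℝ)
    (hlN : ∀ θ, lN θ =
      (1 / (N : ℝ)) * ∑ i, (- ∑ z, q θ (y i) z * Real.log (p (x i) z))
      - (- ∑ z, qhat θ z * Real.log (qhat θ z)))
    (lk : Fin K → (Fin d → ℝ) → ℝ)
    (hlk : ∀ k θ, lk k θ =
      (1 / (M : ℝ)) * ∑ i ∈ B k, (- ∑ z, q θ (y i) z * Real.log (p (x i) z))
      - (- ∑ z, qhatk k θ z * Real.log (qhatk k θ z)))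
    (θ : Fin d → ℝ) :
    fderiv ℝ lN θ - (1 / (K : ℝ)) • ∑ k, fderiv ℝ (lk k) θ
      = (1 / (K : ℝ)) • ∑ k, ∑ z,
          Real.log (qhat θ z / qhatk k θ z) • fderiv ℝ (fun θ' => qhatk k θ' z) θ := by
  have hD : ∀ i z, HasFDerivAt (fun θ' => q θ' (y i) z)
      (fderiv ℝ (fun θ' => q θ' (y i) z) θ) θ :=
    fun i z => (hqdiff (y i) z θ).hasFDerivAt
  have hqsum_y : ∀ θ i, ∑ z, q θ (y i) z = 1 := fun θ i => hqsum θ (y i)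
  have hqhat_ne : ∀ z, qhat θ z ≠ 0 := fun z => by
    rw [hqhat]
    exact (mul_pos (one_div_pos.2 (by exact_mod_cast hN))
      (sum_pos (fun i _ => hqpos θ (y i) z) ⟨⟨0, hN⟩, mem_univ _⟩)).ne'
  have hqhatk_ne : ∀ k z, qhatk k θ z ≠ 0 := fun k z => by
    rw [hqhatk]
    exact (mul_pos (one_div_pos.2 (by exact_mod_cast hM))
      (sum_pos (fun i _ => hqpos θ (y i) z) (card_pos.1 (by rw [hBcard]; exact hM)))).ne'
  have hlN' := (hasFDerivAt_crossEntropy_sub_entropy hD hqsum_y (fun i z => log (p (x i) z))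
    univ _ hqhat hqhat_ne).congr_of_eventuallyEq (.of_forall hlN)
  have hlk' := fun k => (hasFDerivAt_crossEntropy_sub_entropy hD hqsum_y
    (fun i z => log (p (x i) z)) (B k) _ (hqhatk k) (hqhatk_ne k)).congr_of_eventuallyEq
    (.of_forall (hlk k))
  have hpart : ∀ v : Fin N → (Fin d → ℝ) →L[ℝ] ℝ, (1 / (N : ℝ)) • ∑ i, v i
      = (1 / (K : ℝ)) • ∑ k, (1 / (M : ℝ)) • ∑ i ∈ B k, v i := by
    simpa only [Fintype.card_fin] using one_div_card_smul_sum_eq_of_partition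
      (by simpa only [Fintype.card_fin] using hNMK) B hBdisj hBcover
  simp only [hlN'.fderiv, fun k => (hlk' k).fderiv, hpart,
    fun k z => (hasFDerivAt_const_mul_sum hD (B k) _ (hqhatk k) z).fderiv,
    fun k z => log_div (hqhat_ne z) (hqhatk_ne k z)]
  exact smul_sum_add_sum_smul_smul_sum_sub_smul_sum _ _ _ _ _

/-- The bias of the average minibatch gradient for the negative
empirical variational objective `l_N = Ĥ(q,p) − Ĥ(Z)` is
`(1/K)·Σ_k Σ_z ln(q̂(z)/q̂_k(z))·∇q̂_k(z)`. -/
theorem variational_bias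
    {𝒳 𝒴 : Type} [Fintype 𝒳] [Fintype 𝒴]
    (m d N M K : ℕ) (hm : 1 ≤ m) (hd : 1 ≤ d) (hN : 1 ≤ N) (hM : 1 ≤ M) (hK : 1 ≤ K)
    (hNMK : N = M * K)
    (x : Fin N → 𝒳) (y : Fin N → 𝒴)
    (B : Fin K → Finset (Fin N))
    (hBcard : ∀ k, (B k).card = M)
    (hBdisj : ∀ k k', k ≠ k' → Disjoint (B k) (B k'))
    (hBcover : Finset.univ.biUnion B = (Finset.univ : Finset (Fin N)))
    (q : (Fin d → ℝ) → 𝒴 → Fin m → ℝ)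
    (hqdiff : ∀ w z, Differentiable ℝ (fun θ => q θ w z))
    (hqpos : ∀ θ w z, 0 < q θ w z)
    (hqsum : ∀ θ w, ∑ z, q θ w z = 1)
    (p : 𝒳 → Fin m → ℝ)
    (hppos : ∀ c z, 0 < p c z)
    (hpsum : ∀ c, ∑ z, p c z = 1)
    (qhat : (Fin d → ℝ) → Fin m → ℝ)
    (hqhat : ∀ θ z, qhat θ z = (1 / (N : ℝ)) * ∑ i, q θ (y i) z)
    (qhatk : Fin K → (Fin d → ℝ) → Fin m → ℝ)
    (hqhatk : ∀ k θ z, qhatk k θ z = (1 / (M : ℝ)) * ∑ i ∈ B k, q θ (y i) z)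
    (lN : (Fin d → ℝ) → ℝ)
    (hlN : ∀ θ, lN θ =
      (1 / (N : ℝ)) * ∑ i, (- ∑ z, q θ (y i) z * Real.log (p (x i) z))
      - (- ∑ z, qhat θ z * Real.log (qhat θ z)))
    (lk : Fin K → (Fin d → ℝ) → ℝ)
    (hlk : ∀ k θ, lk k θ =
      (1 / (M : ℝ)) * ∑ i ∈ B k, (- ∑ z, q θ (y i) z * Real.log (p (x i) z))
      - (- ∑ z, qhatk k θ z * Real.log (qhatk k θ z)))
    (θ : Fin d → ℝ) :
    fderiv ℝ lN θ - (1 / (K : ℝ)) • ∑ k, fderiv ℝ (lk k) θ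
      = (1 / (K : ℝ)) • ∑ k, ∑ z,
          Real.log (qhat θ z / qhatk k θ z) • fderiv ℝ (fun θ' => qhatk k θ' z) θ :=
  variational_bias_general m d N M K hN hM hNMK x y B hBcard hBdisj hBcover q hqdiff hqpos hqsum p
    qhat hqhat qhatk hqhatk lN hlN lk hlk θ
end

section
/- Let l_N(θ) = (1/N)·Σ_{i=1}^N Σ_{z=1}^m Σ_{z'=1}^m p(z|x_i)·q_θ(z'|y_i)·ln( p̂(z)·q̂_θ(z') / ( p(z|x_i)·q_θ(z'|y_i) ) ) be the negative empirical generalized Brown objective, and for each minibatch k let l_k(θ) be the same quantity computed only from the examples in B_k (using the minibatch estimates p̂_k and q̂_{k,θ} in place of p̂ and q̂_θ). Then for every θ the bias of the average minibatch gradient satisfies ∇l_N(θ) − (1/K)·Σ_{k=1}^K ∇l_k(θ) = (1/N)·Σ_{k=1}^K Σ_{z=1}^m Σ_{z'=1}^m ( ε_k(z,z')·∇q̂_{k,θ}(z') + ln( p̂(z)·q̂_θ(z') / ( p̂_k(z)·q̂_{k,θ}(z') ) ) · Σ_{i∈B_k} p(z|x_i)·∇q_θ(z'|y_i) ), where ε_k(z,z')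 = (1/K)·Σ_{i=1}^N p(z|x_i)·q_θ(z'|y_i)/q̂_θ(z') − Σ_{i∈B_k} p(z|x_i)·q_θ(z'|y_i)/q̂_{k,θ}(z'). -/
/-!
Differentiating `a g log (P Q / (a g))` in `θ` gives `a (log (P Q / (a g)) - 1) ∇g + (a g / Q) ∇Q`.
Since `1/N = (1/K)(1/M)` and the minibatches partition the data, the full-data gradient and the
average minibatch gradient can be compared batch by batch and label pair by label pair. They
differ in two places only: the coefficients of `∇q_θ(z'|y_i)`, whose difference is
`p(z|x_i) log (p̂(z) q̂_θ(z') / (p̂_k(z) q̂_{k,θ}(z')))`, and the marginal terms, where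
`∇q̂_θ = (1/K) Σ_k ∇q̂_{k,θ}` turns the difference into `ε_k(z,z') ∇q̂_{k,θ}(z')`.
-/

open Finset Topology

theorem HasFDerivAt.mul_log_div {E : Type*} [NormedAddCommGroup E] [NormedSpace ℝ E]
    {u v : E → ℝ} {u' v' : E →L[ℝ] ℝ} {x : E} (hu : HasFDerivAt u u' x) (hv : HasFDerivAt v v' x)
    (hu0 : u x ≠ 0) (hv0 : v x ≠ 0) :
    HasFDerivAt (fun t => u t * Real.log (v t / u t))
      ((Real.log (v x / u x) - 1) • u' + (u x / v x) • v') x := by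
  have hlog : (fun t => Real.log (v t / u t)) =ᶠ[𝓝 x] fun t => Real.log (v t) - Real.log (u t) := by
    filter_upwards [hu.continuousAt.eventually_ne hu0, hv.continuousAt.eventually_ne hv0]
      with t hut hvt using Real.log_div hvt hut
  refine (hu.mul (((hv.log hv0).sub (hu.log hu0)).congr_of_eventuallyEq hlog)).congr_fderiv ?_
  ext w
  simp only [add_apply, sub_apply, smul_apply, smul_eq_mul]
  field_simp
  ring

theorem Real.log_div_sub_log_div {x y u : ℝ} (hx : x ≠ 0) (hy : y ≠ 0) (hu : u ≠ 0) :
    Real.log (x / u) - Real.log (y / u) = Real.log (x / y) := by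
  rw [Real.log_div hx hu, Real.log_div hy hu, Real.log_div hx hy]
  ring

theorem sum_eq_sum_sum_of_partition {ι κ β : Type*} [Fintype ι] [Fintype κ] [DecidableEq ι]
    [AddCommMonoid β] {B : κ → Finset ι} (hBdisj : ∀ k k', k ≠ k' → Disjoint (B k) (B k'))
    (hBcover : univ.biUnion B = univ) (f : ι → β) :
    ∑ i, f i = ∑ k, ∑ i ∈ B k, f i := by
  rw [← Finset.sum_biUnion fun k _ k' _ h => hBdisj k k' h, hBcover]

theorem Finset.sum_sum_sum_comm {α β γ R : Type*} [AddCommMonoid R] (s : Finset α) (t : Finset β)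
    (u : Finset γ) (F : α → β → γ → R) :
    ∑ a ∈ s, ∑ b ∈ t, ∑ c ∈ u, F a b c = ∑ b ∈ t, ∑ c ∈ u, ∑ a ∈ s, F a b c := by
  rw [Finset.sum_comm]
  exact Finset.sum_congr rfl fun b _ => Finset.sum_comm

theorem one_div_mul_sum_ne_zero {ι : Type*} {S : Finset ι} {n : ℕ} {f : ι → ℝ} (hn : n ≠ 0)
    (hS : S.Nonempty) (hf : ∀ i, 0 < f i) : 1 / (n : ℝ) * ∑ i ∈ S, f i ≠ 0 :=
  mul_ne_zero (one_div_ne_zero (Nat.cast_ne_zero.mpr hn)) (Finset.sum_pos (fun i _ => hf i) hS).ne'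

section Brown

variable {ι ζ ζ' V E : Type*} [Fintype ζ] [Fintype ζ'] [AddCommGroup V] [Module ℝ V]
  [NormedAddCommGroup E] [NormedSpace ℝ E]

noncomputable def brownObjective (S : Finset ι) (a : ι → ζ → ℝ) (P : ζ → ℝ) (g : ι → ζ' → ℝ)
    (Q : ζ' → ℝ) : ℝ :=
  ∑ i ∈ S, ∑ z, ∑ z', a i z * g i z' * Real.log (P z * Q z' / (a i z * g i z'))

/-- The contribution of one label pair `(z, z')` to the gradient of `brownObjective`; `Dg` and `DQ`
stand for the gradients of `g` and `Q`. -/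
noncomputable def brownGradientTerm (S : Finset ι) (a g : ι → ℝ) (P Q : ℝ) (Dg : ι → V) (DQ : V) :
    V :=
  ∑ i ∈ S, (a i * (Real.log (P * Q / (a i * g i)) - 1)) • Dg i + (∑ i ∈ S, a i * g i / Q) • DQ

theorem hasFDerivAt_brownObjective
    {S : Finset ι} {a : ι → ζ → ℝ} {P : ζ → ℝ} {g : E → ι → ζ' → ℝ} {Q : E → ζ' → ℝ}
    {Dg : ι → ζ' → E →L[ℝ] ℝ} {DQ : ζ' → E →L[ℝ] ℝ} {θ : E}
    (hg : ∀ i ∈ S, ∀ z', HasFDerivAt (fun t => g t i z') (Dg i z') θ)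
    (hQ : ∀ z', HasFDerivAt (fun t => Q t z') (DQ z') θ)
    (ha0 : ∀ i ∈ S, ∀ z, a i z ≠ 0) (hg0 : ∀ i ∈ S, ∀ z', g θ i z' ≠ 0)
    (hP0 : ∀ z, P z ≠ 0) (hQ0 : ∀ z', Q θ z' ≠ 0) :
    HasFDerivAt (fun t => brownObjective S a P (g t) (Q t))
      (∑ z, ∑ z', brownGradientTerm S (a · z) (g θ · z') (P z) (Q θ z') (Dg · z') (DQ z')) θ := by
  have hterm : ∀ i ∈ S, ∀ z z', HasFDerivAt
      (fun t => a i z * g t i z' * Real.log (P z * Q t z' / (a i z * g t i z')))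
      ((a i z * (Real.log (P z * Q θ z' / (a i z * g θ i z')) - 1)) • Dg i z'
        + (a i z * g θ i z' / Q θ z') • DQ z') θ := fun i hi z z' =>
    (((hg i hi z').const_mul (a i z)).mul_log_div ((hQ z').const_mul (P z))
      (mul_ne_zero (ha0 i hi z) (hg0 i hi z')) (mul_ne_zero (hP0 z) (hQ0 z'))).congr_fderiv (by
        rw [smul_smul, smul_smul, mul_comm _ (a i z)]
        congr 2
        field_simp [hP0 z])
  refine (HasFDerivAt.fun_sum fun i hi => HasFDerivAt.fun_sum fun z _ =>
    HasFDerivAt.fun_sum fun z' _ => hterm i hi z z').congr_fderiv ?_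
  simp only [brownGradientTerm, Finset.sum_smul, Finset.sum_add_distrib]
  exact congrArg₂ (· + ·) (Finset.sum_sum_sum_comm _ _ _ _) (Finset.sum_sum_sum_comm _ _ _ _)

theorem hasFDerivAt_of_eq_mul_sum
    {S : Finset ι} {c : ℝ} {G : E → ℝ} {g : E → ι → ℝ} {Dg : ι → E →L[ℝ] ℝ} {θ : E}
    (hG : ∀ t, G t = c * ∑ i ∈ S, g t i) (hg : ∀ i ∈ S, HasFDerivAt (fun t => g t i) (Dg i) θ) :
    HasFDerivAt G (c • ∑ i ∈ S, Dg i) θ := by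
  rw [funext hG]
  exact (HasFDerivAt.fun_sum hg).const_mul c

theorem hasFDerivAt_mul_brownObjective
    {S : Finset ι} {c : ℝ} {a : ι → ζ → ℝ} {P : ζ → ℝ} {g : E → ι → ζ' → ℝ} {Q : E → ζ' → ℝ}
    {Dg : ι → ζ' → E →L[ℝ] ℝ} {θ : E}
    (hQ : ∀ t z', Q t z' = c * ∑ i ∈ S, g t i z')
    (hg : ∀ i ∈ S, ∀ z', HasFDerivAt (fun t => g t i z') (Dg i z') θ)
    (ha0 : ∀ i ∈ S, ∀ z, a i z ≠ 0) (hg0 : ∀ i ∈ S, ∀ z', g θ i z' ≠ 0)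
    (hP0 : ∀ z, P z ≠ 0) (hQ0 : ∀ z', Q θ z' ≠ 0) :
    HasFDerivAt (fun t => c * brownObjective S a P (g t) (Q t))
      (c • ∑ z, ∑ z', brownGradientTerm S (a · z) (g θ · z') (P z) (Q θ z') (Dg · z')
        (c • ∑ i ∈ S, Dg i z')) θ :=
  (hasFDerivAt_brownObjective hg
    (fun z' => hasFDerivAt_of_eq_mul_sum (hQ · z') fun i hi => hg i hi z')
    ha0 hg0 hP0 hQ0).const_mul c

end Brown

section Bias

variable {ι V : Type*} [Fintype ι] [DecidableEq ι] [AddCommGroup V] [Module ℝ V]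
  {N M K : ℕ} {B : Fin K → Finset ι}

theorem one_div_smul_sum_one_div_smul (hNMK : (N : ℝ) = M * K) (X : Fin K → V) :
    (1 / K : ℝ) • ∑ k, (1 / M : ℝ) • X k = (1 / N : ℝ) • ∑ k, X k := by
  rw [← Finset.smul_sum, smul_smul, hNMK, one_div_mul_one_div, mul_comm (K : ℝ)]

theorem smul_sum_sub_smul_sum_smul_sum {β : Type*} (s : Finset β) (c d e : ℝ) (T : β → V)
    (Tk R : Fin K → β → V) (h : ∀ l ∈ s, c • T l - d • ∑ k, e • Tk k l = c • ∑ k, R k l) :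
    c • ∑ l ∈ s, T l - d • ∑ k, e • ∑ l ∈ s, Tk k l = c • ∑ k, ∑ l ∈ s, R k l := by
  simp only [Finset.smul_sum] at h ⊢
  rw [Finset.sum_comm, Finset.sum_comm (s := univ), ← Finset.sum_sub_distrib]
  exact Finset.sum_congr rfl h

theorem brownGradientTerm_bias (hNMK : (N : ℝ) = M * K)
    (hBdisj : ∀ k k', k ≠ k' → Disjoint (B k) (B k')) (hBcover : univ.biUnion B = univ)
    (a g : ι → ℝ) (P Q : ℝ) (Pk Qk : Fin K → ℝ) (f : ι → V)
    (ha : ∀ i, a i ≠ 0) (hg : ∀ i, g i ≠ 0) (hP : P ≠ 0) (hQ : Q ≠ 0)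
    (hPk : ∀ k, Pk k ≠ 0) (hQk : ∀ k, Qk k ≠ 0) :
    (1 / N : ℝ) • brownGradientTerm univ a g P Q f ((1 / N : ℝ) • ∑ i, f i)
      - (1 / K : ℝ) • ∑ k, (1 / M : ℝ) •
          brownGradientTerm (B k) a g (Pk k) (Qk k) f ((1 / M : ℝ) • ∑ i ∈ B k, f i)
      = (1 / N : ℝ) • ∑ k,
          (((1 / K) * ∑ i, a i * g i / Q - ∑ i ∈ B k, a i * g i / Qk k)
              • ((1 / M : ℝ) • ∑ i ∈ B k, f i)
            + Real.log (P * Q / (Pk k * Qk k)) • ∑ i ∈ B k, a i • f i) := by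
  have hpart := sum_eq_sum_sum_of_partition (β := V) hBdisj hBcover
  have hlog : ∀ k,
      ∑ i ∈ B k, (a i * (Real.log (P * Q / (a i * g i)) - 1)) • f i
        - ∑ i ∈ B k, (a i * (Real.log (Pk k * Qk k / (a i * g i)) - 1)) • f i
      = Real.log (P * Q / (Pk k * Qk k)) • ∑ i ∈ B k, a i • f i := by
    intro k
    rw [← Finset.sum_sub_distrib, Finset.smul_sum]
    refine Finset.sum_congr rfl fun i _ => ?_
    rw [← sub_smul, smul_smul, ← Real.log_div_sub_log_div (mul_ne_zero hP hQ)
      (mul_ne_zero (hPk k) (hQk k)) (mul_ne_zero (ha i) (hg i))]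
    ring_nf
  unfold brownGradientTerm
  rw [one_div_smul_sum_one_div_smul hNMK, ← smul_sub]
  congr 1
  rw [hpart, hpart, ← one_div_smul_sum_one_div_smul hNMK, smul_smul, Finset.smul_sum,
    ← Finset.sum_add_distrib, ← Finset.sum_sub_distrib]
  refine Finset.sum_congr rfl fun k _ => ?_
  rw [← hlog k, sub_smul]
  module

theorem brownGradient_bias {ζ ζ' : Type*} [Fintype ζ] [Fintype ζ'] (hNMK : (N : ℝ) = M * K)
    (hBdisj : ∀ k k', k ≠ k' → Disjoint (B k) (B k')) (hBcover : univ.biUnion B = univ)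
    (a : ι → ζ → ℝ) (g : ι → ζ' → ℝ) (P : ζ → ℝ) (Q : ζ' → ℝ) (Pk : Fin K → ζ → ℝ)
    (Qk : Fin K → ζ' → ℝ) (f : ι → ζ' → V)
    (ha : ∀ i z, a i z ≠ 0) (hg : ∀ i z', g i z' ≠ 0) (hP : ∀ z, P z ≠ 0) (hQ : ∀ z', Q z' ≠ 0)
    (hPk : ∀ k z, Pk k z ≠ 0) (hQk : ∀ k z', Qk k z' ≠ 0) :
    (1 / N : ℝ) • ∑ z, ∑ z', brownGradientTerm univ (a · z) (g · z') (P z) (Q z') (f · z')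
        ((1 / N : ℝ) • ∑ i, f i z')
      - (1 / K : ℝ) • ∑ k, (1 / M : ℝ) • ∑ z, ∑ z',
          brownGradientTerm (B k) (a · z) (g · z') (Pk k z) (Qk k z') (f · z')
            ((1 / M : ℝ) • ∑ i ∈ B k, f i z')
      = (1 / N : ℝ) • ∑ k, ∑ z, ∑ z',
          (((1 / K) * ∑ i, a i z * g i z' / Q z' - ∑ i ∈ B k, a i z * g i z' / Qk k z')
              • ((1 / M : ℝ) • ∑ i ∈ B k, f i z')
            + Real.log (P z * Q z' / (Pk k z * Qk k z')) • ∑ i ∈ B k, a i z • f i z') :=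
  smul_sum_sub_smul_sum_smul_sum _ _ _ _ _ _ _ fun z _ =>
    smul_sum_sub_smul_sum_smul_sum _ _ _ _ _ _ _ fun z' _ =>
      brownGradientTerm_bias hNMK hBdisj hBcover _ _ _ _ _ _ _ (ha · z) (hg · z') (hP z) (hQ z')
        (hPk · z) (hQk · z')

end Bias

theorem generalized_brown_bias_general
    {𝒳 𝒴 : Type}
    (m d N M K : ℕ) (hN : 1 ≤ N) (hM : 1 ≤ M)
    (hNMK : N = M * K)
    (x : Fin N → 𝒳) (y : Fin N → 𝒴)
    (B : Fin K → Finset (Fin N))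
    (hBcard : ∀ k, (B k).card = M)
    (hBdisj : ∀ k k', k ≠ k' → Disjoint (B k) (B k'))
    (hBcover : Finset.univ.biUnion B = (Finset.univ : Finset (Fin N)))
    (q : (Fin d → ℝ) → 𝒴 → Fin m → ℝ)
    (hqdiff : ∀ w z, Differentiable ℝ (fun θ => q θ w z))
    (hqpos : ∀ θ w z, 0 < q θ w z)
    (p : 𝒳 → Fin m → ℝ)
    (hppos : ∀ c z, 0 < p c z)
    (qhat : (Fin d → ℝ) → Fin m → ℝ)
    (hqhat : ∀ θ z, qhat θ z = (1 / (N : ℝ)) * ∑ i, q θ (y i) z)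
    (qhatk : Fin K → (Fin d → ℝ) → Fin m → ℝ)
    (hqhatk : ∀ k θ z, qhatk k θ z = (1 / (M : ℝ)) * ∑ i ∈ B k, q θ (y i) z)
    (phat : Fin m → ℝ)
    (hphat : ∀ z, phat z = (1 / (N : ℝ)) * ∑ i, p (x i) z)
    (phatk : Fin K → Fin m → ℝ)
    (hphatk : ∀ k z, phatk k z = (1 / (M : ℝ)) * ∑ i ∈ B k, p (x i) z)
    (lN : (Fin d → ℝ) → ℝ)
    (hlN : ∀ θ, lN θ =
      (1 / (N : ℝ)) * ∑ i, ∑ z, ∑ z',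
        p (x i) z * q θ (y i) z' *
          Real.log ((phat z * qhat θ z') / (p (x i) z * q θ (y i) z')))
    (lk : Fin K → (Fin d → ℝ) → ℝ)
    (hlk : ∀ k θ, lk k θ =
      (1 / (M : ℝ)) * ∑ i ∈ B k, ∑ z, ∑ z',
        p (x i) z * q θ (y i) z' *
          Real.log ((phatk k z * qhatk k θ z') / (p (x i) z * q θ (y i) z')))
    (θ : Fin d → ℝ)
    (eps : Fin K → Fin m → Fin m → ℝ)
    (heps : ∀ k z z', eps k z z' =
      (1 / (K : ℝ)) * ∑ i, p (x i) z * q θ (y i) z' / qhat θ z'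
      - ∑ i ∈ B k, p (x i) z * q θ (y i) z' / qhatk k θ z') :
    fderiv ℝ lN θ - (1 / (K : ℝ)) • ∑ k, fderiv ℝ (lk k) θ
      = (1 / (N : ℝ)) • ∑ k, ∑ z, ∑ z',
          (eps k z z' • fderiv ℝ (fun θ' => qhatk k θ' z') θ
           + Real.log ((phat z * qhat θ z') / (phatk k z * qhatk k θ z')) •
               ∑ i ∈ B k, p (x i) z • fderiv ℝ (fun θ' => q θ' (y i) z') θ) := by
  have hU : (univ : Finset (Fin N)).Nonempty := ⟨⟨0, hN⟩, mem_univ _⟩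
  have hB : ∀ k, (B k).Nonempty := fun k => Finset.card_pos.mp (by rw [hBcard]; omega)
  have hp0 : ∀ c z, p c z ≠ 0 := fun c z => (hppos c z).ne'
  have hq0 : ∀ w z', q θ w z' ≠ 0 := fun w z' => (hqpos θ w z').ne'
  have hphat0 : ∀ z, phat z ≠ 0 := fun z =>
    hphat z ▸ one_div_mul_sum_ne_zero (by omega) hU fun i => hppos _ _
  have hphatk0 : ∀ k z, phatk k z ≠ 0 := fun k z =>
    hphatk k z ▸ one_div_mul_sum_ne_zero (by omega) (hB k) fun i => hppos _ _
  have hqhat0 : ∀ z', qhat θ z' ≠ 0 := fun z' =>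
    hqhat θ z' ▸ one_div_mul_sum_ne_zero (by omega) hU fun i => hqpos _ _ _
  have hqhatk0 : ∀ k z', qhatk k θ z' ≠ 0 := fun k z' =>
    hqhatk k θ z' ▸ one_div_mul_sum_ne_zero (by omega) (hB k) fun i => hqpos _ _ _
  have hDq : ∀ i z', HasFDerivAt (fun t => q t (y i) z') (fderiv ℝ (fun t => q t (y i) z') θ) θ :=
    fun i z' => (hqdiff (y i) z' θ).hasFDerivAt
  have hDlN := (hasFDerivAt_mul_brownObjective (a := fun i z => p (x i) z) (P := phat) hqhat
    (fun i _ => hDq i) (fun i _ => hp0 _) (fun i _ => hq0 _) hphat0 hqhat0).congr_of_eventuallyEq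
    (.of_forall hlN)
  have hDlk := fun k => (hasFDerivAt_mul_brownObjective (a := fun i z => p (x i) z)
    (P := phatk k) (hqhatk k) (fun i _ => hDq i) (fun i _ => hp0 _) (fun i _ => hq0 _)
    (hphatk0 k) (hqhatk0 k)).congr_of_eventuallyEq (.of_forall (hlk k))
  have hDqhatk : ∀ k z', fderiv ℝ (fun t => qhatk k t z') θ
      = (1 / M : ℝ) • ∑ i ∈ B k, fderiv ℝ (fun t => q t (y i) z') θ := fun k z' =>
    (hasFDerivAt_of_eq_mul_sum (hqhatk k · z') fun i _ => hDq i z').fderiv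
  rw [hDlN.fderiv, Finset.sum_congr rfl fun k _ => (hDlk k).fderiv]
  simp only [heps, hDqhatk]
  exact brownGradient_bias (by exact_mod_cast hNMK) hBdisj hBcover _ _ _ _ _ _ _
    (fun _ _ => hp0 _ _) (fun _ _ => hq0 _ _) hphat0 hqhat0 hphatk0 hqhatk0

/-- The bias of the average minibatch gradient for the negative
empirical generalized Brown objective. -/
theorem generalized_brown_bias
    {𝒳 𝒴 : Type} [Fintype 𝒳] [Fintype 𝒴]
    (m d N M K : ℕ) (hm : 1 ≤ m) (hd : 1 ≤ d) (hN : 1 ≤ N) (hM : 1 ≤ M) (hK : 1 ≤ K)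
    (hNMK : N = M * K)
    (x : Fin N → 𝒳) (y : Fin N → 𝒴)
    (B : Fin K → Finset (Fin N))
    (hBcard : ∀ k, (B k).card = M)
    (hBdisj : ∀ k k', k ≠ k' → Disjoint (B k) (B k'))
    (hBcover : Finset.univ.biUnion B = (Finset.univ : Finset (Fin N)))
    (q : (Fin d → ℝ) → 𝒴 → Fin m → ℝ)
    (hqdiff : ∀ w z, Differentiable ℝ (fun θ => q θ w z))
    (hqpos : ∀ θ w z, 0 < q θ w z)
    (hqsum : ∀ θ w, ∑ z, q θ w z = 1)
    (p : 𝒳 → Fin m → ℝ)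
    (hppos : ∀ c z, 0 < p c z)
    (hpsum : ∀ c, ∑ z, p c z = 1)
    (qhat : (Fin d → ℝ) → Fin m → ℝ)
    (hqhat : ∀ θ z, qhat θ z = (1 / (N : ℝ)) * ∑ i, q θ (y i) z)
    (qhatk : Fin K → (Fin d → ℝ) → Fin m → ℝ)
    (hqhatk : ∀ k θ z, qhatk k θ z = (1 / (M : ℝ)) * ∑ i ∈ B k, q θ (y i) z)
    (phat : Fin m → ℝ)
    (hphat : ∀ z, phat z = (1 / (N : ℝ)) * ∑ i, p (x i) z)
    (phatk : Fin K → Fin m → ℝ)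
    (hphatk : ∀ k z, phatk k z = (1 / (M : ℝ)) * ∑ i ∈ B k, p (x i) z)
    (lN : (Fin d → ℝ) → ℝ)
    (hlN : ∀ θ, lN θ =
      (1 / (N : ℝ)) * ∑ i, ∑ z, ∑ z',
        p (x i) z * q θ (y i) z' *
          Real.log ((phat z * qhat θ z') / (p (x i) z * q θ (y i) z')))
    (lk : Fin K → (Fin d → ℝ) → ℝ)
    (hlk : ∀ k θ, lk k θ =
      (1 / (M : ℝ)) * ∑ i ∈ B k, ∑ z, ∑ z',
        p (x i) z * q θ (y i) z' *
          Real.log ((phatk k z * qhatk k θ z') / (p (x i) z * q θ (y i) z')))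
    (θ : Fin d → ℝ)
    (eps : Fin K → Fin m → Fin m → ℝ)
    (heps : ∀ k z z', eps k z z' =
      (1 / (K : ℝ)) * ∑ i, p (x i) z * q θ (y i) z' / qhat θ z'
      - ∑ i ∈ B k, p (x i) z * q θ (y i) z' / qhatk k θ z') :
    fderiv ℝ lN θ - (1 / (K : ℝ)) • ∑ k, fderiv ℝ (lk k) θ
      = (1 / (N : ℝ)) • ∑ k, ∑ z, ∑ z',
          (eps k z z' • fderiv ℝ (fun θ' => qhatk k θ' z') θ
           + Real.log ((phat z * qhat θ z') / (phatk k z * qhatk k θ z')) •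
               ∑ i ∈ B k, p (x i) z • fderiv ℝ (fun θ' => q θ' (y i) z') θ) :=
  generalized_brown_bias_general m d N M K hN hM hNMK x y B hBcard hBdisj hBcover q hqdiff hqpos p
    hppos qhat hqhat qhatk hqhatk phat hphat phatk hphatk lN hlN lk hlk θ eps heps
end
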